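/- arXiv:2004.02811 — 5 statements merged into one kernel-verified Lean document; each statement's English description precedes it below -/
import Mathlib

section
/- Let G be a cancellative semigroup, K a finite nonempty subset of G, F a finite subset of G, and ε > 0. If F is (K, ε/|K|)-invariant, i.e. |KF △ F| ≤ (ε/|K|)·|F|, then the K-core of F, defined as F_K = {g ∈ F : Kg ⊆ F}, satisfies |F_K| ≥ (1 - ε)·|F|. -/
open scoped Classical Pointwise

/-!
If `g ∈ F` lies outside the `K`-core, some `k ∈ K` sends it to `kg ∈ KF \ F`. For fixed `k`,
left cancellation makes `g ↦ kg` injective, so `|F \ F_K| ≤ |K| · |KF \ F| ≤ |K| · |KF △ F| ≤ ε |F|`.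
-/

namespace Finset

variable {G : Type*} [Mul G]

noncomputable def core (K F : Finset G) : Finset G :=
  F.filter fun g => ∀ k ∈ K, k * g ∈ F

variable [IsLeftCancelMul G] (K F : Finset G)

theorem card_filter_mul_notMem_le {k : G} (hk : k ∈ K) :
    #(F.filter fun g => k * g ∉ F) ≤ #((K * F) \ F) :=
  card_le_card_of_injOn (k * ·)
    (fun _ hg => mem_sdiff.2 ⟨mul_mem_mul hk (mem_filter.1 hg).1, (mem_filter.1 hg).2⟩)
    (fun _ _ _ _ h => mul_left_cancel h)

theorem card_sdiff_core_le : #(F \ core K F) ≤ #K * #((K * F) \ F) := by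
  have hcover : F \ core K F ⊆ K.biUnion fun k => F.filter fun g => k * g ∉ F := by
    intro g hg
    simp only [core, mem_sdiff, mem_filter, not_and, not_forall] at hg
    obtain ⟨k, hk, hkg⟩ := hg.2 hg.1
    exact mem_biUnion.2 ⟨k, hk, mem_filter.2 ⟨hg.1, hkg⟩⟩
  calc #(F \ core K F)
      ≤ ∑ k ∈ K, #(F.filter fun g => k * g ∉ F) := (card_le_card hcover).trans card_biUnion_le
    _ ≤ ∑ _k ∈ K, #((K * F) \ F) := sum_le_sum fun k hk => card_filter_mul_notMem_le K F hk
    _ = #K * #((K * F) \ F) := by rw [sum_const, smul_eq_mul]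

theorem card_le_card_core_add : #F ≤ #(core K F) + #K * #((K * F) \ F) := by
  have hsplit : #(F \ core K F) + #(core K F) = #F :=
    card_sdiff_add_card_eq_card (filter_subset _ _)
  have := card_sdiff_core_le K F
  omega

end Finset

theorem stmt0_general {G : Type*} [Semigroup G] [IsCancelMul G]
    (K F : Finset G) (ε : ℝ)
    (hinv : ((symmDiff (K * F) F).card : ℝ) ≤ ε / (K.card : ℝ) * (F.card : ℝ)) :
    (1 - ε) * (F.card : ℝ) ≤ ((F.filter fun g => ∀ k ∈ K, k * g ∈ F).card : ℝ) := by
  obtain rfl | hK := K.eq_empty_or_nonempty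
  · -- `ε / 0 = 0`, so `hinv` forces `F = ∅`
    simp_all
  have hK₀ : (K.card : ℝ) ≠ 0 := by exact_mod_cast hK.card_pos.ne'
  have hsdiff : (((K * F) \ F).card : ℝ) ≤ ε / K.card * F.card := by
    have : (K * F) \ F ⊆ symmDiff (K * F) F := le_sup_left
    exact le_trans (by exact_mod_cast Finset.card_le_card this) hinv
  have hcore : (F.card : ℝ) ≤ (Finset.core K F).card + K.card * ((K * F) \ F).card := by
    exact_mod_cast Finset.card_le_card_core_add K F
  calc (1 - ε) * (F.card : ℝ)
      = F.card - K.card * (ε / K.card * F.card) := by field_simp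
    _ ≤ F.card - K.card * ((K * F) \ F).card := by gcongr
    _ ≤ (Finset.core K F).card := by linarith

/-- If a finite set `F` in a cancellative semigroup `G` is
`(K, ε/|K|)`-invariant, i.e. `|KF △ F| ≤ (ε/|K|)·|F|`, then the `K`-core of `F`
(the set of `g ∈ F` with `Kg ⊆ F`) has cardinality at least `(1-ε)·|F|`. -/
theorem stmt0 {G : Type*} [Semigroup G] [IsCancelMul G]
    (K F : Finset G) (hK : K.Nonempty) (ε : ℝ) (hε : 0 < ε)
    (hinv : ((symmDiff (K * F) F).card : ℝ) ≤ ε / (K.card : ℝ) * (F.card : ℝ)) :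
    (1 - ε) * (F.card : ℝ) ≤ ((F.filter fun g => ∀ k ∈ K, k * g ∈ F).card : ℝ) :=
  stmt0_general K F ε hinv
end

section
/- Let (F_n) be a nested Følner sequence in G with |F_{n+1}|/|F_n| → 1, and let A ⊆ G have lower density 0 and positive upper density along (F_n). Then there exists a subset A' ⊆ A such that A' has density 0 along (F_n) (i.e. lim_n |F_n ∩ A'|/|F_n| = 0), and limsup_n |F_n ∩ A'|/|F_n ∩ A| ≥ 2/3. -/
open scoped Classical Pointwise
open Filter

/-- A Følner sequence of finite nonempty subsets of `G`. -/
def IsFolner {G : Type*} [Mul G] (F : ℕ → Finset G) : Prop :=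
  (∀ n, (F n).Nonempty) ∧
  ∀ K : Finset G, ∀ ε : ℝ, 0 < ε →
    ∀ᶠ n in atTop, ((symmDiff (K * F n) (F n)).card : ℝ) ≤ ε * ((F n).card : ℝ)

open Topology

/-!
The density of `A` along `(F n)` keeps dropping to `0` and climbing back above some `c > 0`,
while `|F n|` grows by factors tending to `1`. So for every `ε > 0` there are arbitrarily late
windows `[m, n]` with `|F m ∩ A| < ε |F n ∩ A|` on which the density of `A` stays `≤ ε`:
take `m` where the density is below `ε δ` for `δ = min c (ε/2)`, and `n` the first later time
it exceeds `δ`; slow growth means one step cannot push it past `2 δ ≤ ε`.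
With `ε k → 0`, `ε k ≤ 1/3` and disjoint consecutive windows, let `A'` be the part of `A` that
enters `F` during some window. For `m k ≤ i < m (k+1)` everything of `A'` seen at time `i`
already lies in `F (min i (n k)) ∩ A`, so `A'` has density `≤ ε k` there; and at time `n k`
all but an `ε k`-fraction of `F (n k) ∩ A` lies in `A'`.
-/

theorem exists_windows_seq {Q : ℕ → ℕ → ℕ → Prop}
    (h : ∀ k P, ∃ m n, P < m ∧ m ≤ n ∧ Q k m n) :
    ∃ m n : ℕ → ℕ, ∀ k, m k ≤ n k ∧ n k < m (k + 1) ∧ Q k (m k) (n k) := by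
  choose M N hPM hMN hQ using h
  let P : ℕ → ℕ := fun k => Nat.rec 0 (fun j p => N j p) k
  exact ⟨fun k => M k (P k), fun k => N k (P k), fun k => ⟨hMN _ _, hPM _ _, hQ _ _⟩⟩

section Sequences

variable {a b : ℕ → ℝ}

theorem eventually_ne_zero_of_tendsto_div_one
    (h : Tendsto (fun n => b (n + 1) / b n) atTop (𝓝 1)) : ∀ᶠ n in atTop, b n ≠ 0 :=
  (h.eventually_ne one_ne_zero).mono fun n hn hb => hn (by simp [hb])

theorem eventually_le_mul_of_tendsto_div_one (hb : 0 ≤ b)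
    (h : Tendsto (fun n => b (n + 1) / b n) atTop (𝓝 1)) {δ : ℝ} (hδ : 0 < δ) :
    ∀ᶠ n in atTop, b (n + 1) ≤ (1 + δ) * b n := by
  filter_upwards [h.eventually_lt_const (lt_add_of_pos_right 1 hδ),
    eventually_ne_zero_of_tendsto_div_one h] with n hlt hne
  exact ((div_lt_iff₀ ((hb n).lt_of_ne' hne)).1 hlt).le

theorem frequently_lt_mul_of_liminf_div_eq_zero (ha : 0 ≤ a) (hab : a ≤ b)
    (hb : ∀ᶠ n in atTop, b n ≠ 0) (h : liminf (fun n => a n / b n) atTop = 0)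
    {c : ℝ} (hc : 0 < c) : ∃ᶠ n in atTop, a n < c * b n := by
  have hbdd : IsBoundedUnder (· ≤ ·) atTop (fun n => a n / b n) :=
    isBoundedUnder_of ⟨1, fun n => div_le_one_of_le₀ (hab n) ((ha n).trans (hab n))⟩
  refine ((frequently_lt_of_liminf_lt hbdd.isCoboundedUnder_ge (h ▸ hc)).and_eventually
    hb).mono ?_
  rintro n ⟨hlt, hne⟩
  exact (div_lt_iff₀ (((ha n).trans (hab n)).lt_of_ne' hne)).1 hlt

theorem exists_frequently_mul_lt_of_limsup_div_pos (ha : 0 ≤ a) (hb : 0 ≤ b)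
    (h : 0 < limsup (fun n => a n / b n) atTop) :
    ∃ c > 0, ∃ᶠ n in atTop, c * b n < a n := by
  have hbdd : IsBoundedUnder (· ≥ ·) atTop (fun n => a n / b n) :=
    isBoundedUnder_of ⟨0, fun n => div_nonneg (ha n) (hb n)⟩
  obtain ⟨c, hc, hcL⟩ := exists_between h
  refine ⟨c, hc, (frequently_lt_of_lt_limsup hbdd.isCoboundedUnder_le hcL).mono fun n hn => ?_⟩
  have hbn : 0 < b n := (hb n).lt_of_ne' fun h0 => by simp [h0] at hn; linarith
  exact (lt_div_iff₀ hbn).1 hn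

theorem exists_low_density_window (ha : 0 ≤ a) (hb : Monotone b)
    (hinc : ∀ n, a (n + 1) - a n ≤ b (n + 1) - b n)
    (hgrowth : ∀ δ > 0, ∀ᶠ n in atTop, b (n + 1) ≤ (1 + δ) * b n)
    (hlow : ∀ c > 0, ∃ᶠ n in atTop, a n < c * b n)
    (hupp : ∃ c > 0, ∃ᶠ n in atTop, c * b n < a n)
    {ε : ℝ} (hε : 0 < ε) (hε1 : ε ≤ 1) (P : ℕ) :
    ∃ m n, P < m ∧ m ≤ n ∧ a m < ε * a n ∧ ∀ i ∈ Set.Icc m n, a i ≤ ε * b i := by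
  obtain ⟨c, hc, hfreq⟩ := hupp
  set δ := min c (ε / 2)
  have hδ : 0 < δ := lt_min hc (half_pos hε)
  obtain ⟨N, hN⟩ := eventually_atTop.1 (hgrowth δ hδ)
  obtain ⟨m, ham, hm⟩ :=
    ((hlow (ε * δ) (mul_pos hε hδ)).and_eventually (eventually_gt_atTop (max P N))).exists
  have hbm : 0 < b m := pos_of_mul_pos_right ((ha m).trans_lt ham) (mul_pos hε hδ).le
  have hb0 : ∀ i, m ≤ i → 0 ≤ b i := fun i hi => hbm.le.trans (hb hi)
  have hex : ∃ n, m ≤ n ∧ δ * b n < a n := by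
    obtain ⟨n, hn, hmn⟩ := (hfreq.and_eventually (eventually_ge_atTop m)).exists
    exact ⟨n, hmn, (mul_le_mul_of_nonneg_right (min_le_left _ _) (hb0 n hmn)).trans_lt hn⟩
  obtain ⟨n, ⟨hmn, han⟩, hmin⟩ :
      ∃ n, (m ≤ n ∧ δ * b n < a n) ∧ ∀ i < n, ¬(m ≤ i ∧ δ * b i < a i) :=
    ⟨Nat.find hex, Nat.find_spec hex, fun i => Nat.find_min hex⟩
  have hbelow : ∀ i, m ≤ i → i < n → a i ≤ δ * b i := fun i hmi hin =>
    not_lt.1 fun h => hmin i hin ⟨hmi, h⟩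
  have hδε : 2 * δ ≤ ε := by linarith [min_le_right c (ε / 2)]
  have hamn : a m < ε * a n :=
    calc a m < ε * δ * b m := ham
      _ ≤ ε * (δ * b n) := by rw [mul_assoc]; gcongr; exact hb hmn
      _ < ε * a n := by gcongr
  have hmn_lt : m < n := hmn.lt_of_ne fun h => by
    subst h
    nlinarith [mul_le_mul_of_nonneg_right hε1 (mul_nonneg hδ.le hbm.le)]
  obtain ⟨p, rfl⟩ : ∃ p, n = p + 1 := ⟨n - 1, by omega⟩
  -- one step adds at most `b (p + 1) - b p ≤ δ * b p` new elements
  have hap : a (p + 1) ≤ 2 * δ * b p := by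
    linarith [hinc p, hbelow p (by omega) (by omega), hN p (by omega)]
  refine ⟨m, p + 1, by omega, hmn, hamn, fun i ⟨hmi, hin⟩ => ?_⟩
  rcases hin.lt_or_eq with hin | rfl
  · calc a i ≤ δ * b i := hbelow i hmi hin
      _ ≤ ε * b i := by gcongr; exacts [hb0 i hmi, by linarith]
  · calc a (p + 1) ≤ 2 * δ * b p := hap
      _ ≤ ε * b (p + 1) := by gcongr; exacts [hb0 p (by omega), hb p.le_succ]

theorem tendsto_zero_of_le_on_blocks {u ε : ℕ → ℝ} {m : ℕ → ℕ} (hm : StrictMono m)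
    (hε : Antitone ε) (hε0 : Tendsto ε atTop (𝓝 0)) (hu0 : 0 ≤ u)
    (hu : ∀ k i, m k ≤ i → i < m (k + 1) → u i ≤ ε k) : Tendsto u atTop (𝓝 0) := by
  have hbound : ∀ k, ∀ᶠ i in atTop, u i ≤ ε k := fun k =>
    (eventually_ge_atTop (m k)).mono fun i hki => by
      obtain ⟨j, hji, hij⟩ := hm.exists_between_of_tendsto_atTop hm.tendsto_atTop
        (x := i + 1) (Nat.lt_succ_of_le ((hm.monotone k.zero_le).trans hki))
      have hkj : k ≤ j := Nat.lt_succ_iff.1 (hm.lt_iff_lt.1 (hki.trans_lt hij))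
      exact (hu j i (Nat.lt_succ_iff.1 hji) hij).trans (hε hkj)
  refine tendsto_order.2 ⟨fun c hc => .of_forall fun i => hc.trans_le (hu0 i), fun c hc => ?_⟩
  obtain ⟨k, hk⟩ := (hε0.eventually (gt_mem_nhds hc)).exists
  exact (hbound k).mono fun i hi => hi.trans_lt hk

end Sequences

section Windows

variable {α : Type*} (F : ℕ → Finset α) (A : Set α)

theorem card_filter_sub_card_filter_le {s t : Finset α} (hst : s ⊆ t) :
    ((t.filter (· ∈ A)).card : ℝ) - (s.filter (· ∈ A)).card ≤ t.card - s.card := by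
  have hsub : t.filter (· ∈ A) ⊆ s.filter (· ∈ A) ∪ (t \ s) := fun g hg => by
    by_cases hgs : g ∈ s
    · exact Finset.mem_union_left _ (Finset.mem_filter.2 ⟨hgs, (Finset.mem_filter.1 hg).2⟩)
    · exact Finset.mem_union_right _ (Finset.mem_sdiff.2 ⟨Finset.filter_subset _ _ hg, hgs⟩)
  have := (Finset.card_le_card hsub).trans (Finset.card_union_le _ _)
  rw [Finset.card_sdiff_of_subset hst] at this
  have hcard := Finset.card_le_card hst
  rw [sub_le_sub_iff, ← Nat.cast_add, ← Nat.cast_add, Nat.cast_le]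
  omega

theorem exists_low_density_windows (hF : Monotone F)
    (hratio : Tendsto (fun n => ((F (n + 1)).card : ℝ) / ((F n).card : ℝ)) atTop (𝓝 1))
    (hlow : liminf (fun n => (((F n).filter (· ∈ A)).card : ℝ) / ((F n).card : ℝ)) atTop = 0)
    (hupp : 0 < limsup (fun n => (((F n).filter (· ∈ A)).card : ℝ) / ((F n).card : ℝ)) atTop)
    {ε : ℕ → ℝ} (hε : ∀ k, 0 < ε k) (hε1 : ∀ k, ε k ≤ 1) :
    ∃ m n : ℕ → ℕ, ∀ k, m k ≤ n k ∧ n k < m (k + 1) ∧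
      (((F (m k)).filter (· ∈ A)).card : ℝ) < ε k * ((F (n k)).filter (· ∈ A)).card ∧
      ∀ i ∈ Set.Icc (m k) (n k),
        (((F i).filter (· ∈ A)).card : ℝ) ≤ ε k * (F i).card := by
  set a : ℕ → ℝ := fun n => ((F n).filter (· ∈ A)).card
  set b : ℕ → ℝ := fun n => (F n).card
  have ha : 0 ≤ a := fun n => Nat.cast_nonneg _
  have hb : 0 ≤ b := fun n => Nat.cast_nonneg _
  have hab : a ≤ b := fun n => Nat.cast_le.2 (Finset.card_le_card (Finset.filter_subset _ _))
  refine exists_windows_seq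
    (Q := fun k m n => a m < ε k * a n ∧ ∀ i ∈ Set.Icc m n, a i ≤ ε k * b i) fun k P =>
    exists_low_density_window ha
      (fun i j hij => Nat.cast_le.2 (Finset.card_le_card (hF hij)))
      (fun n => card_filter_sub_card_filter_le A (hF n.le_succ))
      (fun δ hδ => eventually_le_mul_of_tendsto_div_one hb hratio hδ)
      (fun c hc => frequently_lt_mul_of_liminf_div_eq_zero ha hab
        (eventually_ne_zero_of_tendsto_div_one hratio) hlow hc)
      (exists_frequently_mul_lt_of_limsup_div_pos ha hb hupp) (hε k) (hε1 k) P

def windowPart (m n : ℕ → ℕ) : Set α := {g ∈ A | ∃ k, g ∈ F (n k) ∧ g ∉ F (m k)}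

variable {F A} {m n : ℕ → ℕ}

theorem filter_windowPart_subset (hF : Monotone F) (hm : Monotone m) (hn : Monotone n) {k i : ℕ}
    (hi : i < m (k + 1)) :
    (F i).filter (· ∈ windowPart F A m n) ⊆ (F (min i (n k))).filter (· ∈ A) := by
  intro g hg
  obtain ⟨hgi, hgA, j, hgn, hgm⟩ := Finset.mem_filter.1 hg
  refine Finset.mem_filter.2 ⟨?_, hgA⟩
  rw [hF.map_inf]
  refine Finset.mem_inter.2 ⟨hgi, ?_⟩
  rcases le_or_gt j k with hjk | hkj
  · exact hF (hn hjk) hgn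
  · exact absurd (hF (hi.le.trans (hm hkj)) hgi) hgm

theorem card_filter_le_add_card_filter_windowPart (k : ℕ) :
    ((F (n k)).filter (· ∈ A)).card ≤
      ((F (m k)).filter (· ∈ A)).card + ((F (n k)).filter (· ∈ windowPart F A m n)).card := by
  refine (Finset.card_le_card fun g hg => ?_).trans (Finset.card_union_le _ _)
  obtain ⟨hgn, hgA⟩ := Finset.mem_filter.1 hg
  by_cases hgm : g ∈ F (m k)
  · exact Finset.mem_union_left _ (Finset.mem_filter.2 ⟨hgm, hgA⟩)
  · exact Finset.mem_union_right _ (Finset.mem_filter.2 ⟨hgn, hgA, k, hgn, hgm⟩)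

theorem tendsto_density_windowPart (hF : Monotone F) {ε : ℕ → ℝ} (hε : Antitone ε)
    (hε0 : Tendsto ε atTop (𝓝 0)) (hmn : ∀ k, m k ≤ n k) (hnm : ∀ k, n k < m (k + 1))
    (hdense : ∀ k, ∀ i ∈ Set.Icc (m k) (n k),
      (((F i).filter (· ∈ A)).card : ℝ) ≤ ε k * (F i).card) :
    Tendsto (fun i => (((F i).filter (· ∈ windowPart F A m n)).card : ℝ) / (F i).card)
      atTop (𝓝 0) := by
  have hm : StrictMono m := strictMono_nat_of_lt_succ fun k => (hmn k).trans_lt (hnm k)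
  have hn : StrictMono n := strictMono_nat_of_lt_succ fun k => (hnm k).trans_le (hmn (k + 1))
  refine tendsto_zero_of_le_on_blocks hm hε hε0 (fun i => by positivity) fun k i hki hik => ?_
  have hj : min i (n k) ∈ Set.Icc (m k) (n k) := ⟨le_min hki (hmn k), min_le_right _ _⟩
  refine div_le_of_le_mul₀ (Nat.cast_nonneg _) (hε.le_of_tendsto hε0 k) ?_
  calc (((F i).filter (· ∈ windowPart F A m n)).card : ℝ)
      ≤ ((F (min i (n k))).filter (· ∈ A)).card :=
        Nat.cast_le.2 <| Finset.card_le_card <|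
          filter_windowPart_subset hF hm.monotone hn.monotone hik
    _ ≤ ε k * (F (min i (n k))).card := hdense k _ hj
    _ ≤ ε k * (F i).card := by
        gcongr
        exacts [hε.le_of_tendsto hε0 k, hF (min_le_left _ _)]

theorem le_limsup_windowPart {ε : ℕ → ℝ} {c : ℝ} (hεc : ∀ k, ε k ≤ 1 - c)
    (hmn : ∀ k, m k ≤ n k) (hnm : ∀ k, n k < m (k + 1))
    (hsparse : ∀ k,
      (((F (m k)).filter (· ∈ A)).card : ℝ) < ε k * ((F (n k)).filter (· ∈ A)).card) :
    c ≤ limsup (fun i => (((F i).filter (· ∈ windowPart F A m n)).card : ℝ) /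
      ((F i).filter (· ∈ A)).card) atTop := by
  have hn : StrictMono n := strictMono_nat_of_lt_succ fun k => (hnm k).trans_le (hmn (k + 1))
  have hbdd : IsBoundedUnder (· ≤ ·) atTop (fun i =>
      (((F i).filter (· ∈ windowPart F A m n)).card : ℝ) / ((F i).filter (· ∈ A)).card) :=
    isBoundedUnder_of ⟨1, fun i => div_le_one_of_le₀ (Nat.cast_le.2 (Finset.card_le_card
      (Finset.monotone_filter_right _ fun _ _ hg => hg.1))) (Nat.cast_nonneg _)⟩
  refine le_limsup_of_frequently_le (hn.tendsto_atTop.frequently (.of_forall fun k => ?_)) hbdd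
  have hpos : (0 : ℝ) < ((F (n k)).filter (· ∈ A)).card := by
    refine (Nat.cast_nonneg _).lt_of_ne fun h0 => ?_
    have := hsparse k
    rw [← h0, mul_zero] at this
    exact (Nat.cast_nonneg _).not_gt this
  have hsplit : (((F (n k)).filter (· ∈ A)).card : ℝ) ≤ ((F (m k)).filter (· ∈ A)).card +
      ((F (n k)).filter (· ∈ windowPart F A m n)).card := by
    exact_mod_cast card_filter_le_add_card_filter_windowPart k
  rw [le_div_iff₀ hpos]
  nlinarith [mul_le_mul_of_nonneg_right (hεc k) hpos.le, hsparse k]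

end Windows

theorem stmt3_general {G : Type*}
    (F : ℕ → Finset G)
    (hnested : ∀ n, F n ⊆ F (n + 1))
    (hratio : Tendsto (fun n => ((F (n + 1)).card : ℝ) / ((F n).card : ℝ)) atTop (nhds 1))
    (A : Set G)
    (hlow : liminf (fun n => (((F n).filter (· ∈ A)).card : ℝ) / ((F n).card : ℝ)) atTop = 0)
    (hupp : 0 < limsup (fun n => (((F n).filter (· ∈ A)).card : ℝ) / ((F n).card : ℝ)) atTop) :
    ∃ A' : Set G, A' ⊆ A ∧
      Tendsto (fun n => (((F n).filter (· ∈ A')).card : ℝ) / ((F n).card : ℝ)) atTop (nhds 0) ∧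
      2 / 3 ≤ limsup
        (fun n => (((F n).filter (· ∈ A')).card : ℝ) / (((F n).filter (· ∈ A)).card : ℝ))
        atTop := by
  have hF : Monotone F := monotone_nat_of_le_succ hnested
  set ε : ℕ → ℝ := fun k => 1 / (3 * (k + 1))
  have hε : ∀ k, 0 < ε k := fun k => by positivity
  have hε3 : ∀ k, ε k ≤ 1 / 3 := fun k =>
    one_div_le_one_div_of_le (by norm_num) (by linarith [k.cast_nonneg (α := ℝ)])
  have hεanti : Antitone ε := fun i j hij => by
    dsimp only [ε]
    gcongr
  have hε0 : Tendsto ε atTop (𝓝 0) := by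
    simpa [ε, mul_comm] using tendsto_one_div_add_atTop_nhds_zero_nat.const_mul (1 / 3 : ℝ)
  obtain ⟨m, n, hwin⟩ := exists_low_density_windows F A hF hratio hlow hupp hε
    fun k => (hε3 k).trans (by norm_num)
  choose hmn hnm hsparse hdense using hwin
  exact ⟨windowPart F A m n, fun g hg => hg.1,
    tendsto_density_windowPart hF hεanti hε0 hmn hnm hdense,
    le_limsup_windowPart (fun k => (hε3 k).trans_eq (by norm_num)) hmn hnm hsparse⟩

/-- For a nested Følner sequence with `|F_{n+1}|/|F_n| → 1` and a set `A`
of lower density `0` and positive upper density (with `|F_n ∩ A| → ∞`), there exists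
`A' ⊆ A` of density `0` along `(F_n)` with `limsup |F_n ∩ A'|/|F_n ∩ A| ≥ 2/3`. -/
theorem stmt3 {G : Type*} [Semigroup G] [IsCancelMul G] [Countable G]
    (F : ℕ → Finset G) (hFol : IsFolner F)
    (hnested : ∀ n, F n ⊆ F (n + 1))
    (hratio : Tendsto (fun n => ((F (n + 1)).card : ℝ) / ((F n).card : ℝ)) atTop (nhds 1))
    (A : Set G)
    (hcard : Tendsto (fun n => ((F n).filter (· ∈ A)).card) atTop atTop)
    (hlow : liminf (fun n => (((F n).filter (· ∈ A)).card : ℝ) / ((F n).card : ℝ)) atTop = 0)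
    (hupp : 0 < limsup (fun n => (((F n).filter (· ∈ A)).card : ℝ) / ((F n).card : ℝ)) atTop) :
    ∃ A' : Set G, A' ⊆ A ∧
      Tendsto (fun n => (((F n).filter (· ∈ A')).card : ℝ) / ((F n).card : ℝ)) atTop (nhds 0) ∧
      2 / 3 ≤ limsup
        (fun n => (((F n).filter (· ∈ A')).card : ℝ) / (((F n).filter (· ∈ A)).card : ℝ))
        atTop :=
  stmt3_general F hnested hratio A hlow hupp
end

section
/- Let G be a countable group acting by homeomorphisms on a compact metric space X, let x ∈ X, and let μ be a probability measure on X. Suppose there is a Følner sequence (F'_n) and a point y in the orbit closure of x such that the averages (1/|F'_n|) Σ_{h∈F'_n} δ_{h(y)} converge weakly* to μ. Then there exists a Følner sequence (F_n) in G (of the form F_n = F'_n g_n for suitable g_n ∈ G) such that (1/|F_n|) Σ_{h∈F_n} δ_{h(x)} converges weakly* to μ. -/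
open scoped Classical Pointwise
open Filter MeasureTheory

/-- An action of `G` on `X`: `τ 1 = id` and `τ (g*h) = τ g ∘ τ h`. -/
def IsGAction {G X : Type*} [Monoid G] (τ : G → X → X) : Prop :=
  (∀ x, τ 1 x = x) ∧ ∀ g h x, τ (g * h) x = τ g (τ h x)

/-- Let a countable group `G` act by homeomorphisms on a compact metric
space `X`, let `x ∈ X` and let `μ` be a probability measure on `X`.  If there is a Følner
sequence `(F'_n)` and a point `y` in the orbit closure of `x` whose empirical measures
along `(F'_n)` converge weakly* to `μ`, then there exist `g_n ∈ G` such that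
`F_n = F'_n g_n` is a Følner sequence along which the empirical measures of `x`
converge weakly* to `μ`. -/
theorem stmt6 {G : Type*} [Group G] [Countable G]
    {X : Type*} [MetricSpace X] [CompactSpace X] [MeasurableSpace X] [BorelSpace X]
    (τ : G → X → X) (hact : IsGAction τ) (hcont : ∀ g, Continuous (τ g))
    (x y : X) (μ : Measure X) [IsProbabilityMeasure μ]
    (F' : ℕ → Finset G) (hF' : IsFolner F')
    (hy : y ∈ closure {z | ∃ g : G, z = τ g x})
    (hgen : ∀ T : C(X, ℝ),
      Tendsto (fun n => (∑ h ∈ F' n, T (τ h y)) / ((F' n).card : ℝ)) atTop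
        (nhds (∫ z, T z ∂μ))) :
    ∃ g : ℕ → G,
      IsFolner (fun n => (F' n).image (· * g n)) ∧
      ∀ T : C(X, ℝ),
        Tendsto (fun n => (∑ h ∈ (F' n).image (· * g n), T (τ h x)) /
            (((F' n).image (· * g n)).card : ℝ)) atTop (nhds (∫ z, T z ∂μ)) := by
  obtain ⟨hne, hfol⟩ := hF'
  -- choose g n with τ (g n) x uniformly close to y over F' n
  have hex : ∀ n : ℕ, ∃ g : G, ∀ h ∈ F' n, dist (τ h (τ g x)) (τ h y) < 1 / (n + 1) := by
    intro n
    have hpos : (0:ℝ) < 1 / (n + 1) := by positivity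
    set U : Set X := ⋂ h ∈ F' n, (τ h) ⁻¹' (Metric.ball (τ h y) (1/(n+1))) with hU
    have hUopen : IsOpen U :=
      isOpen_biInter_finset fun h _ => Metric.isOpen_ball.preimage (hcont h)
    have hyU : y ∈ U := by
      simp only [hU, Set.mem_iInter, Set.mem_preimage, Metric.mem_ball]
      intro h _
      simpa using hpos
    obtain ⟨z, hzU, hz⟩ := mem_closure_iff.mp hy U hUopen hyU
    obtain ⟨g, rfl⟩ := hz
    refine ⟨g, fun h hh => ?_⟩
    have := Set.mem_iInter.mp hzU h
    have := Set.mem_iInter.mp this hh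
    simpa [Metric.mem_ball] using this
  choose g hg using hex
  have hinj : ∀ n : ℕ, Function.Injective (· * g n) := fun n => mul_left_injective (g n)
  have hcard : ∀ n, (((F' n).image (· * g n)).card : ℝ) = ((F' n).card : ℝ) := by
    intro n
    rw [Finset.card_image_of_injective _ (hinj n)]
  refine ⟨g, ⟨fun n => Finset.Nonempty.image (hne n) _, ?_⟩, ?_⟩
  · -- Følner property
    intro K ε hε
    filter_upwards [hfol K ε hε] with n hn
    have hKimg : K * (F' n).image (· * g n) = (K * F' n).image (· * g n) := by
      ext a
      simp only [Finset.mem_mul, Finset.mem_image]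
      constructor
      · rintro ⟨b, hb, c, hc, rfl⟩
        obtain ⟨c', hc', rfl⟩ := hc
        exact ⟨b * c', ⟨b, hb, c', hc', rfl⟩, mul_assoc _ _ _⟩
      · rintro ⟨a', ⟨b, hb, c, hc, rfl⟩, rfl⟩
        exact ⟨b, hb, c * g n, ⟨c, hc, rfl⟩, (mul_assoc _ _ _).symm⟩
    have heq : symmDiff (K * (F' n).image (· * g n)) ((F' n).image (· * g n))
        = (symmDiff (K * F' n) (F' n)).image (· * g n) := by
      rw [hKimg, Finset.image_symmDiff _ _ (hinj n)]
    rw [heq, Finset.card_image_of_injective _ (hinj n), hcard]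
    exact hn
  · -- convergence of empirical measures
    intro T
    have huc : UniformContinuous T := CompactSpace.uniformContinuous_of_continuous T.continuous
    have key : Tendsto (fun n => (∑ h ∈ (F' n).image (· * g n), T (τ h x)) /
        (((F' n).image (· * g n)).card : ℝ)
        - (∑ h ∈ F' n, T (τ h y)) / ((F' n).card : ℝ)) atTop (nhds 0) := by
      rw [NormedAddCommGroup.tendsto_nhds_zero]
      intro ε hε
      obtain ⟨δ, hδ, hδ'⟩ := Metric.uniformContinuous_iff.mp huc (ε/2) (by linarith)
      have hsmall : ∀ᶠ n : ℕ in atTop, 1 / ((n:ℝ) + 1) < δ :=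
        tendsto_one_div_add_atTop_nhds_zero_nat.eventually (gt_mem_nhds hδ)
      filter_upwards [hsmall] with n hn
      have hc0 : (0:ℝ) < ((F' n).card : ℝ) := by
        exact_mod_cast Finset.card_pos.mpr (hne n)
      have hsum : (∑ h ∈ (F' n).image (· * g n), T (τ h x))
          = ∑ h ∈ F' n, T (τ h (τ (g n) x)) := by
        rw [Finset.sum_image (fun a _ b _ hab => hinj n hab)]
        exact Finset.sum_congr rfl fun h _ => by rw [hact.2 h (g n) x]
      rw [hcard n, hsum, div_sub_div_same, ← Finset.sum_sub_distrib]
      have hterm : ∀ h ∈ F' n, |T (τ h (τ (g n) x)) - T (τ h y)| ≤ ε / 2 := by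
        intro h hh
        have hd : dist (τ h (τ (g n) x)) (τ h y) < δ := lt_trans (hg n h hh) hn
        have := hδ' hd
        rw [Real.dist_eq] at this
        exact le_of_lt this
      have hbound : |∑ h ∈ F' n, (T (τ h (τ (g n) x)) - T (τ h y))|
          ≤ ((F' n).card : ℝ) * (ε / 2) := by
        calc |∑ h ∈ F' n, (T (τ h (τ (g n) x)) - T (τ h y))|
            ≤ ∑ h ∈ F' n, |T (τ h (τ (g n) x)) - T (τ h y)| :=
              Finset.abs_sum_le_sum_abs _ _
          _ ≤ ∑ _h ∈ F' n, (ε / 2) := Finset.sum_le_sum hterm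
          _ = ((F' n).card : ℝ) * (ε / 2) := by simp [mul_comm]
      have : ‖(∑ h ∈ F' n, (T (τ h (τ (g n) x)) - T (τ h y))) / ((F' n).card : ℝ)‖
          ≤ ε / 2 := by
        rw [Real.norm_eq_abs, abs_div, abs_of_pos hc0, div_le_iff₀ hc0]
        calc |∑ h ∈ F' n, (T (τ h (τ (g n) x)) - T (τ h y))|
            ≤ ((F' n).card : ℝ) * (ε / 2) := hbound
          _ = ε / 2 * ((F' n).card : ℝ) := by ring
      exact lt_of_le_of_lt this (by linarith)
    have := key.add (hgen T)
    simpa [sub_add_cancel] using this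
end

section
/- Let G be a countable amenable group, and for x ∈ Λ^G (Λ finite) and finite K ⊆ G, let C_x(K|A) denote the number of distinct patterns B ∈ Λ^K occurring in x anchored at elements of A ⊆ G. Then the function f(K) = log C_x(K|A) satisfies Shearer's inequality: whenever a finite family 𝒦 of finite subsets of G is a k-cover of a finite set F (each element of F belongs to at least k members of 𝒦), then f(F) ≤ (1/k) Σ_{K∈𝒦} f(K). -/
open scoped Classical

/-- `C_x(K|A)`: the number of distinct patterns over `K` occurring in `x` anchored at
elements of `A`. -/
noncomputable def patternCount {G : Type*} [Group G] {Λ : Type*} [Fintype Λ]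
    (x : G → Λ) (K : Finset G) (A : Set G) : ℕ :=
  Set.ncard {B : {g // g ∈ K} → Λ | ∃ g ∈ A, ∀ h : {g // g ∈ K}, x (h.1 * g) = B h}

/-! `C_x(K|A)` counts the restrictions to `K` of the family `X = {h ↦ x (h * g) | g ∈ A}`, so the
claim is Shearer's inequality `|X_F| ≤ ∏ |X_K| ^ (1/k)`, proved by induction on `F`. Splitting `X`
by the value `l` at a new point `a`, the induction hypothesis bounds each fibre. Members of the
cover missing `a` are bounded by the unsplit count, while for the (at least `k`) members containing
`a` the fibre counts add up exactly, so Hölder's inequality with exponents `1/k`, summing to at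
least `1`, recombines the fibres. -/

open scoped NNReal ENNReal
open Finset Function MeasureTheory

namespace NNReal

theorem sum_prod_rpow_le_prod_sum_rpow_of_sum_eq_one {ι Λ : Type*} [Fintype Λ] (s : Finset ι)
    (c : Λ → ι → ℝ≥0) {p : ι → ℝ} (hp : ∀ i ∈ s, 0 ≤ p i) (hsum : ∑ i ∈ s, p i = 1) :
    ∑ l, ∏ i ∈ s, c l i ^ p i ≤ ∏ i ∈ s, (∑ l, c l i) ^ p i := by
  let _ : MeasurableSpace Λ := ⊤
  have := ENNReal.lintegral_prod_norm_pow_le (μ := Measure.count) s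
    (f := fun i l => (c l i : ℝ≥0∞)) (fun i _ => Measurable.of_discrete.aemeasurable) hsum hp
  simp only [lintegral_count, tsum_fintype] at this
  rw [← ENNReal.coe_le_coe]
  push_cast
  convert this using 3 with l - i hi i hi
  · exact ENNReal.coe_rpow_of_nonneg _ (hp i hi)
  · rw [ENNReal.coe_rpow_of_nonneg _ (hp i hi), ENNReal.ofNNReal_finsetSum]

theorem sum_prod_rpow_le_prod_sum_rpow {ι Λ : Type*} [Fintype Λ] (s : Finset ι)
    (c : Λ → ι → ℝ≥0) {p : ι → ℝ} (hp : ∀ i ∈ s, 0 ≤ p i) (hsum : 1 ≤ ∑ i ∈ s, p i) :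
    ∑ l, ∏ i ∈ s, c l i ^ p i ≤ ∏ i ∈ s, (∑ l, c l i) ^ p i := by
  set P := ∑ i ∈ s, p i
  -- Hölder with the normalized exponents `p / P`; the excess `p - p / P` is paid for by `c ≤ ∑ c`.
  have hP : 0 < P := zero_lt_one.trans_le hsum
  have hp' : ∀ i ∈ s, 0 ≤ p i / P := fun i hi => div_nonneg (hp i hi) hP.le
  have hexcess : ∀ i ∈ s, 0 ≤ p i - p i / P := fun i hi =>
    sub_nonneg.2 (div_le_self (hp i hi) hsum)
  have hsplit : ∀ x : ℝ≥0, ∀ i ∈ s, x ^ p i = x ^ (p i - p i / P) * x ^ (p i / P) :=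
    fun x i hi => by rw [← rpow_add_of_nonneg x (hexcess i hi) (hp' i hi), sub_add_cancel]
  calc ∑ l, ∏ i ∈ s, c l i ^ p i
      ≤ ∑ l, (∏ i ∈ s, (∑ l, c l i) ^ (p i - p i / P)) * ∏ i ∈ s, c l i ^ (p i / P) := by
        gcongr with l
        rw [← prod_mul_distrib]
        refine prod_le_prod' fun i hi => ?_
        rw [hsplit _ i hi]
        gcongr
        · exact hexcess i hi
        · exact single_le_sum (f := fun l => c l i) (fun _ _ => zero_le) (mem_univ l)
    _ ≤ (∏ i ∈ s, (∑ l, c l i) ^ (p i - p i / P)) * ∏ i ∈ s, (∑ l, c l i) ^ (p i / P) := by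
        rw [← mul_sum]
        gcongr
        exact sum_prod_rpow_le_prod_sum_rpow_of_sum_eq_one s c hp'
          (by rw [← sum_div, div_self hP.ne'])
    _ = ∏ i ∈ s, (∑ l, c l i) ^ p i := by
        rw [← prod_mul_distrib]
        exact prod_congr rfl fun i hi => (hsplit _ i hi).symm

end NNReal

section Restrict

variable {γ Λ : Type*}

theorem ncard_restrict_image_eq_sum_fiber [Fintype Λ] {K : Finset γ} {a : γ} (ha : a ∈ K)
    (X : Set (γ → Λ)) :
    (K.restrict '' X).ncard = ∑ l, (K.restrict '' {f ∈ X | f a = l}).ncard := by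
  have hX : X = ⋃ l, {f ∈ X | f a = l} := by ext f; simp
  have hdisj : Pairwise (Disjoint on fun l => K.restrict '' {f ∈ X | f a = l}) := by
    refine fun l₁ l₂ hne => Set.disjoint_left.2 ?_
    rintro _ ⟨f₁, ⟨-, rfl⟩, rfl⟩ ⟨f₂, ⟨-, hf₂⟩, he⟩
    exact hne (hf₂ ▸ (congrFun he ⟨a, ha⟩).symm)
  conv_lhs => rw [hX, Set.image_iUnion]
  rw [Set.ncard_iUnion_of_finite (fun _ => Set.toFinite _) hdisj, finsum_eq_sum_of_fintype]

theorem ncard_restrict_insert_image_le_sum_fiber [Fintype Λ] (a : γ) (F : Finset γ)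
    (X : Set (γ → Λ)) :
    ((insert a F).restrict '' X).ncard ≤ ∑ l, (F.restrict '' {f ∈ X | f a = l}).ncard := by
  rw [ncard_restrict_image_eq_sum_fiber (mem_insert_self a F)]
  refine sum_le_sum fun l _ => ?_
  have hinj : Set.InjOn (restrict₂ (π := fun _ => Λ) (subset_insert a F))
      ((insert a F).restrict '' {f ∈ X | f a = l}) := by
    rintro _ ⟨f₁, ⟨-, hf₁⟩, rfl⟩ _ ⟨f₂, ⟨-, hf₂⟩, rfl⟩ he
    funext ⟨b, hb⟩
    rcases mem_insert.1 hb with rfl | hb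
    · exact hf₁.trans hf₂.symm
    · exact congrFun he ⟨b, hb⟩
  rw [← hinj.ncard_image, Set.image_image]
  rfl

theorem ncard_restrict_image_le_prod_rpow [Fintype Λ] {ι : Type*} [Fintype ι]
    (𝒦 : ι → Finset γ) (F : Finset γ) {k : ℕ} (hk : 0 < k)
    (hcover : ∀ g ∈ F, k ≤ (univ.filter fun i => g ∈ 𝒦 i).card) (X : Set (γ → Λ)) :
    ((F.restrict '' X).ncard : ℝ≥0) ≤ ∏ i, (((𝒦 i).restrict '' X).ncard : ℝ≥0) ^ (k : ℝ)⁻¹ := by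
  induction F using Finset.induction_on generalizing X with
  | empty =>
    rcases X.eq_empty_or_nonempty with rfl | hX
    · simp
    calc (((∅ : Finset γ).restrict '' X).ncard : ℝ≥0) ≤ 1 := by
          exact_mod_cast Set.ncard_le_one_of_subsingleton _
      _ ≤ _ := one_le_prod'' fun i =>
          NNReal.one_le_rpow (by exact_mod_cast (hX.image _).ncard_pos) (by positivity)
  | @insert a F _ ih =>
    set κ : ℝ := (k : ℝ)⁻¹
    set I := univ.filter fun i => a ∈ 𝒦 i
    set m : ι → ℝ≥0 := fun i => ((𝒦 i).restrict '' X).ncard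
    set q : Λ → ι → ℝ≥0 := fun l i => ((𝒦 i).restrict '' {f ∈ X | f a = l}).ncard
    have hqm : ∀ l i, q l i ≤ m i := fun l i => by
      simp only [q, m]
      exact_mod_cast Set.ncard_le_ncard (Set.image_mono (Set.sep_subset _ _))
    have hsum : ∀ i ∈ I, ∑ l, q l i = m i := fun i hi => by
      simp only [q, m]
      exact_mod_cast (ncard_restrict_image_eq_sum_fiber (mem_filter.1 hi).2 X).symm
    have hI : 1 ≤ ∑ _i ∈ I, κ := by
      rw [sum_const, nsmul_eq_mul, ← div_eq_mul_inv, one_le_div (by positivity)]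
      exact_mod_cast hcover a (mem_insert_self a F)
    calc (((insert a F).restrict '' X).ncard : ℝ≥0)
        ≤ ∑ l, ((F.restrict '' {f ∈ X | f a = l}).ncard : ℝ≥0) := by
          exact_mod_cast ncard_restrict_insert_image_le_sum_fiber a F X
      _ ≤ ∑ l, ∏ i, q l i ^ κ :=
          sum_le_sum fun l _ => ih (fun g hg => hcover g (mem_insert_of_mem hg)) _
      _ ≤ ∑ l, (∏ i ∈ Iᶜ, m i ^ κ) * ∏ i ∈ I, q l i ^ κ := by
          gcongr with l
          rw [← prod_mul_prod_compl I, mul_comm]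
          gcongr with i
          exact hqm l i
      _ ≤ (∏ i ∈ Iᶜ, m i ^ κ) * ∏ i ∈ I, (∑ l, q l i) ^ κ := by
          rw [← mul_sum]
          gcongr
          exact NNReal.sum_prod_rpow_le_prod_sum_rpow I q (fun _ _ => by positivity) hI
      _ = ∏ i, m i ^ κ := by
          rw [mul_comm, prod_congr rfl fun i hi => congrArg (· ^ κ) (hsum i hi),
            prod_mul_prod_compl]

end Restrict

theorem Real.log_natCast_le_inv_mul_sum_log_of_le_prod_rpow {ι : Type*} [Fintype ι] {n k : ℕ}
    {m : ι → ℕ} (hk : 0 < k) (h : (n : ℝ≥0) ≤ ∏ i, (m i : ℝ≥0) ^ (k : ℝ)⁻¹) :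
    Real.log n ≤ (1 / (k : ℝ)) * ∑ i, Real.log (m i) := by
  rcases n.eq_zero_or_pos with rfl | hn
  · rw [Nat.cast_zero, Real.log_zero]
    exact mul_nonneg (by positivity) (sum_nonneg fun i _ => Real.log_natCast_nonneg _)
  have hm : ∀ i, 0 < (m i : ℝ) := fun i => by
    have hprod : ∏ i, (m i : ℝ≥0) ^ (k : ℝ)⁻¹ ≠ 0 := (lt_of_lt_of_le (by exact_mod_cast hn) h).ne'
    have := (prod_ne_zero_iff.1 hprod) i (mem_univ i)
    refine Nat.cast_pos.2 (Nat.pos_of_ne_zero fun h0 => this ?_)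
    rw [h0, Nat.cast_zero, NNReal.zero_rpow (by positivity)]
  have hR : (n : ℝ) ≤ ∏ i, (m i : ℝ) ^ (k : ℝ)⁻¹ := by
    have := NNReal.coe_le_coe.2 h
    push_cast at this
    exact this
  calc Real.log n ≤ Real.log (∏ i, (m i : ℝ) ^ (k : ℝ)⁻¹) :=
        Real.log_le_log (by exact_mod_cast hn) hR
    _ = ∑ i, (k : ℝ)⁻¹ * Real.log (m i) := by
        rw [Real.log_prod fun i _ => (Real.rpow_pos_of_pos (hm i) _).ne']
        exact sum_congr rfl fun i _ => Real.log_rpow (hm i) _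
    _ = (1 / (k : ℝ)) * ∑ i, Real.log (m i) := by rw [mul_sum, one_div]

theorem patternCount_eq_ncard_restrict_image {G Λ : Type*} [Group G] [Fintype Λ] (x : G → Λ)
    (K : Finset G) (A : Set G) :
    patternCount x K A = (K.restrict '' ((fun g h => x (h * g)) '' A)).ncard := by
  rw [patternCount, Set.image_image]
  congr 1
  ext B
  simp [funext_iff, Finset.restrict]

theorem stmt13_general {G : Type*} [Group G] {Λ : Type*} [Fintype Λ]
    (x : G → Λ) (A : Set G)
    {ι : Type*} [Fintype ι] (𝒦 : ι → Finset G) (F : Finset G)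
    (k : ℕ) (hk : 0 < k)
    (hcover : ∀ g ∈ F, k ≤ (Finset.univ.filter fun i => g ∈ 𝒦 i).card) :
    Real.log (patternCount x F A) ≤
      (1 / (k : ℝ)) * ∑ i, Real.log (patternCount x (𝒦 i) A) := by
  apply Real.log_natCast_le_inv_mul_sum_log_of_le_prod_rpow hk
  simp only [patternCount_eq_ncard_restrict_image]
  exact ncard_restrict_image_le_prod_rpow 𝒦 F hk hcover _

/-- The function `K ↦ log C_x(K|A)` satisfies Shearer's inequality:
if the family `(𝒦 i)` is a `k`-cover of `F`, then
`log C_x(F|A) ≤ (1/k) Σᵢ log C_x(𝒦ᵢ|A)`. -/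
theorem stmt13 {G : Type*} [Group G] [Countable G] {Λ : Type*} [Fintype Λ]
    (x : G → Λ) (A : Set G)
    {ι : Type*} [Fintype ι] (𝒦 : ι → Finset G) (F : Finset G)
    (k : ℕ) (hk : 0 < k)
    (hcover : ∀ g ∈ F, k ≤ (Finset.univ.filter fun i => g ∈ 𝒦 i).card) :
    Real.log (patternCount x F A) ≤
      (1 / (k : ℝ)) * ∑ i, Real.log (patternCount x (𝒦 i) A) :=
  stmt13_general x A 𝒦 F k hk hcover
end

section
/- Let b ≥ 2 and consider sequences x ∈ Λ^ℕ automatic with respect to the multiplicative semigroup (ℕ, ×) and base b, defined via the prime-exponent digit encoding φ and a finite automaton (S, s₀, (α_v)_{v<b}, ω). Let K_m = {2^{e} : e ∈ [b^{m+1}, 2b^{m+1} − 1]}. Then the number of distinct blocks B_N ∈ Λ^{K_m}, B_N(M) = x(MN) for M ∈ K_m, as N ranges over ℕ, is at most |S|²·b^{m+1} = |S|²·|K_m|; consequently log C_x(K_m)/|K_m| → 0 as m → ∞. -/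
open scoped Classical
open Filter

/-- The digit encoding `φ(N)` (little-endian list of base-`b` digits): the concatenation
of the base-`b` expansions of the exponents `e_j` in the prime factorization
`N = ∏ p_j^{e_j}`, in increasing order of `j` (so big-endian it reads `⋯ ē₂ ē₁`). -/
noncomputable def multPhi (b N : ℕ) : List ℕ :=
  ((List.range N).map fun j => Nat.digits b ((Nat.factorization N) (Nat.nth Nat.Prime j))).flatten

/-- `K_m = {2^e : e ∈ [b^{m+1}, 2b^{m+1} − 1]}`. -/
def Km (b m : ℕ) : Finset ℕ :=
  (Finset.Icc (b ^ (m + 1)) (2 * b ^ (m + 1) - 1)).image (2 ^ ·)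

namespace Stmt19Aux

/-- The list of the `k` lowest base-`b` digits of `r` (padded with zeros). -/
def pad (b : ℕ) : ℕ → ℕ → List ℕ
  | 0, _ => []
  | k+1, r => r % b :: pad b k (r / b)

lemma digits_split {b : ℕ} (hb : 2 ≤ b) (k : ℕ) :
    ∀ n, b ^ k ≤ n → Nat.digits b n = pad b k (n % b ^ k) ++ Nat.digits b (n / b ^ k) := by
  induction k with
  | zero => intro n _; simp [pad]
  | succ k ih =>
    intro n hn
    have hb1 : 1 < b := hb
    have hbpos : 0 < b := by omega
    have hnpos : 0 < n := lt_of_lt_of_le (pow_pos hbpos _) hn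
    have h1 : Nat.digits b n = n % b :: Nat.digits b (n / b) := Nat.digits_def' hb1 hnpos
    have h2 : b ^ k ≤ n / b := by
      rw [Nat.le_div_iff_mul_le hbpos]
      calc b ^ k * b = b ^ (k+1) := (pow_succ b k).symm
      _ ≤ n := hn
    have h3 := ih (n / b) h2
    have e1 : n % b ^ (k+1) % b = n % b :=
      Nat.mod_mod_of_dvd n (dvd_pow_self b (Nat.succ_ne_zero k))
    have e2 : n % b ^ (k+1) / b = n / b % b ^ k := by
      rw [pow_succ']
      exact Nat.mod_mul_right_div_self n b (b ^ k)
    have e3 : n / b / b ^ k = n / b ^ (k+1) := by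
      rw [Nat.div_div_eq_div_mul, ← pow_succ']
    rw [h1, h3]
    simp only [pad, e1, e2, e3, List.cons_append]

lemma nth_prime_ge (j : ℕ) : j + 2 ≤ Nat.nth Nat.Prime j := by
  induction j with
  | zero => simp [Nat.nth_prime_zero_eq_two]
  | succ j ih =>
    have h2 : Nat.nth Nat.Prime j < Nat.nth Nat.Prime (j+1) :=
      (Nat.nth_lt_nth Nat.infinite_setOf_prime).2 (Nat.lt_succ_self j)
    omega

lemma flatten_range_eq (f : ℕ → List ℕ) {N L : ℕ} (hNL : N ≤ L)
    (hf : ∀ j, N ≤ j → f j = []) :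
    ((List.range L).map f).flatten = ((List.range N).map f).flatten := by
  obtain ⟨d, rfl⟩ := Nat.exists_eq_add_of_le hNL
  rw [List.range_add, List.map_append, List.flatten_append, List.map_map]
  have h0 : (((List.range d).map (f ∘ (N + ·)))).flatten = [] := by
    rw [List.flatten_eq_nil_iff]
    intro x hx
    simp only [List.mem_map, List.mem_range, Function.comp] at hx
    obtain ⟨i, _, rfl⟩ := hx
    exact hf _ (Nat.le_add_right _ _)
  rw [h0, List.append_nil]

/-- The part of `multPhi` corresponding to the odd primes. -/
noncomputable def tailList (b N : ℕ) : List ℕ :=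
  ((List.range N).map fun j =>
    Nat.digits b ((Nat.factorization N) (Nat.nth Nat.Prime (j+1)))).flatten

lemma flatten_range_succ (f : ℕ → List ℕ) (L : ℕ) :
    ((List.range (L+1)).map f).flatten
      = f 0 ++ ((List.range L).map (f ∘ Nat.succ)).flatten := by
  rw [List.range_succ_eq_map, List.map_cons, List.flatten_cons, List.map_map]

lemma multPhi_two_pow_mul {b : ℕ} (N : ℕ) (hN : 1 ≤ N) (e : ℕ) (he : 1 ≤ e) :
    multPhi b (2 ^ e * N) =
      Nat.digits b (e + (Nat.factorization N) 2) ++ tailList b N := by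
  have h2e : 2 ≤ 2 ^ e := by
    calc (2:ℕ) = 2 ^ 1 := (pow_one 2).symm
    _ ≤ 2 ^ e := Nat.pow_le_pow_right (by norm_num) he
  have hP : N + 1 ≤ 2 ^ e * N := by nlinarith
  have hfacmul : (Nat.factorization (2 ^ e * N)) =
      Nat.factorization (2 ^ e) + Nat.factorization N :=
    Nat.factorization_mul (pow_ne_zero _ two_ne_zero) (by omega)
  have hfact : ∀ j : ℕ, (Nat.factorization (2 ^ e * N)) (Nat.nth Nat.Prime (j+1)) =
      (Nat.factorization N) (Nat.nth Nat.Prime (j+1)) := by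
    intro j
    have hne : Nat.nth Nat.Prime (j+1) ≠ 2 := by
      have := nth_prime_ge (j+1); omega
    rw [hfacmul]
    simp [Nat.Prime.factorization_pow Nat.prime_two, Finsupp.single_apply,
      Ne.symm hne]
  have hfact0 : (Nat.factorization (2 ^ e * N)) (Nat.nth Nat.Prime 0) =
      e + (Nat.factorization N) 2 := by
    rw [Nat.nth_prime_zero_eq_two, hfacmul]
    simp [Nat.Prime.factorization_pow Nat.prime_two, Finsupp.single_apply]
  obtain ⟨Q, hQ⟩ : ∃ Q, 2 ^ e * N = Q + 1 := ⟨2 ^ e * N - 1, by omega⟩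
  unfold multPhi
  set f : ℕ → List ℕ :=
    fun j => Nat.digits b ((Nat.factorization (2 ^ e * N)) (Nat.nth Nat.Prime j)) with hf
  rw [hQ, flatten_range_succ]
  congr 1
  · rw [hf]; exact congrArg _ hfact0
  · have hmapeq : (List.range Q).map (f ∘ Nat.succ) =
        (List.range Q).map (fun j =>
          Nat.digits b ((Nat.factorization N) (Nat.nth Nat.Prime (j+1)))) := by
      apply List.map_congr_left
      intro a _
      show f (a+1) = _
      rw [hf]
      exact congrArg _ (hfact a)
    rw [hmapeq]
    unfold tailList
    exact flatten_range_eq _ (by omega) (fun j hj => by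
      have hge := nth_prime_ge (j+1)
      have h0 : (Nat.factorization N) (Nat.nth Nat.Prime (j+1)) = 0 :=
        Nat.factorization_eq_zero_of_lt (by omega)
      simp [h0])

lemma card_Km {b : ℕ} (hb : 2 ≤ b) (m : ℕ) : (Km b m).card = b ^ (m+1) := by
  unfold Km
  rw [Finset.card_image_of_injective _ (Nat.pow_right_injective (le_refl 2)),
    Nat.card_Icc]
  have : 0 < b ^ (m+1) := pow_pos (by omega) _
  omega

end Stmt19Aux

/-- Let `x ∈ Λ^ℕ` be automatic with respect to the multiplicative
semigroup `(ℕ, ×)` and base `b ≥ 2`, via the prime-exponent digit encoding `φ` and a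
finite automaton `(S, s₀, (α_v), ω)`.  Then the number of distinct blocks
`B_N : K_m → Λ`, `B_N(M) = x(M·N)`, as `N` ranges over `ℕ`, is at most
`|S|²·b^{m+1} = |S|²·|K_m|`; consequently `log C_x(K_m)/|K_m| → 0`. -/
theorem stmt19 {Λ : Type*} [Fintype Λ] (b : ℕ) (hb : 2 ≤ b)
    (x : ℕ → Λ) (S : Type*) [Fintype S] (s₀ : S) (α : ℕ → S → S) (ω : S → Λ)
    (hx : ∀ N : ℕ, 1 ≤ N → x N = ω ((multPhi b N).foldr (fun v s => α v s) s₀)) :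
    (∀ m : ℕ,
      Set.ncard {B : {M // M ∈ Km b m} → Λ |
          ∃ N : ℕ, 1 ≤ N ∧ ∀ M : {M // M ∈ Km b m}, B M = x (M.1 * N)} ≤
        Fintype.card S ^ 2 * b ^ (m + 1)) ∧
    Tendsto (fun m =>
        Real.log (Set.ncard {B : {M // M ∈ Km b m} → Λ |
            ∃ N : ℕ, 1 ≤ N ∧ ∀ M : {M // M ∈ Km b m}, B M = x (M.1 * N)}) /
          ((Km b m).card : ℝ))
      atTop (nhds 0) := by
  have hb1 : (1:ℕ) < b := hb
  set σ : ℕ → S → S := fun v s => α v s with hσ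
  have key : ∀ m : ℕ,
      Set.ncard {B : {M // M ∈ Km b m} → Λ |
          ∃ N : ℕ, 1 ≤ N ∧ ∀ M : {M // M ∈ Km b m}, B M = x (M.1 * N)} ≤
        Fintype.card S ^ 2 * b ^ (m + 1) := by
    intro m
    have hBpos : 0 < b ^ (m+1) := pow_pos (by omega) _
    set F : S × S × Fin (b ^ (m+1)) → ({M // M ∈ Km b m} → Λ) := fun p M =>
      ω (List.foldr σ
          (if Nat.log 2 M.1 + (p.2.2 : ℕ) < 2 * b ^ (m+1) then p.1 else p.2.1)
          (Stmt19Aux.pad b (m+1) ((Nat.log 2 M.1 + (p.2.2 : ℕ)) % b ^ (m+1)))) with hF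
    have hsub : {B : {M // M ∈ Km b m} → Λ |
        ∃ N : ℕ, 1 ≤ N ∧ ∀ M : {M // M ∈ Km b m}, B M = x (M.1 * N)} ⊆ Set.range F := by
      rintro B ⟨N, hN, hBN⟩
      set e₀ := (Nat.factorization N) 2 with he₀
      obtain ⟨q, r, hrlt, he0⟩ : ∃ q r, r < b ^ (m+1) ∧ e₀ = q * b ^ (m+1) + r :=
        ⟨e₀ / b ^ (m+1), e₀ % b ^ (m+1), Nat.mod_lt _ hBpos,
          (Nat.div_add_mod' e₀ (b ^ (m+1))).symm⟩
      refine ⟨(List.foldr σ (List.foldr σ s₀ (Stmt19Aux.tailList b N)) (Nat.digits b (q + 1)),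
               List.foldr σ (List.foldr σ s₀ (Stmt19Aux.tailList b N)) (Nat.digits b (q + 2)),
               ⟨r, hrlt⟩), ?_⟩
      funext M
      obtain ⟨e₁, he₁, hM⟩ : ∃ e₁, e₁ ∈ Finset.Icc (b ^ (m+1)) (2 * b ^ (m+1) - 1) ∧
          2 ^ e₁ = M.1 := by
        have h := M.2
        unfold Km at h
        rw [Finset.mem_image] at h
        exact h
      rw [Finset.mem_Icc] at he₁
      have hlog : Nat.log 2 M.1 = e₁ := by rw [← hM]; exact Nat.log_pow one_lt_two e₁
      have hMN : 1 ≤ M.1 * N := by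
        have : 0 < M.1 := by rw [← hM]; positivity
        exact Nat.one_le_iff_ne_zero.2 (by positivity)
      have hxval : x (M.1 * N) = ω (List.foldr σ s₀ (multPhi b (2 ^ e₁ * N))) := by
        rw [← hM]; exact hx _ (by rw [hM]; exact hMN)
      have he₁pos : 1 ≤ e₁ := le_trans (by omega) he₁.1
      rw [hBN M, hxval, Stmt19Aux.multPhi_two_pow_mul N hN e₁ he₁pos, ← he₀,
        List.foldr_append]
      have hsplit := Stmt19Aux.digits_split hb (m+1) (e₁ + e₀) (by omega)
      rw [hsplit, List.foldr_append]
      have hmod : (e₁ + e₀) % b ^ (m+1) = (e₁ + r) % b ^ (m+1) := by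
        conv_lhs => rw [show e₁ + e₀ = e₁ + r + q * b ^ (m+1) by rw [he0]; ring]
        exact Nat.add_mul_mod_self_right _ _ _
      have hdivsum : (e₁ + e₀) / b ^ (m+1) = (e₁ + r) / b ^ (m+1) + q := by
        conv_lhs => rw [show e₁ + e₀ = e₁ + r + q * b ^ (m+1) by rw [he0]; ring]
        exact Nat.add_mul_div_right _ _ hBpos
      by_cases hcase : e₁ + r < 2 * b ^ (m+1)
      · have hq1 : (e₁ + r) / b ^ (m+1) = 1 :=
          Nat.div_eq_of_lt_le (by omega) (by omega)
        have hdiv' : (e₁ + e₀) / b ^ (m+1) = q + 1 := by omega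
        simp only [hF, hlog, Fin.val_mk]
        rw [if_pos hcase, hmod, hdiv']
      · have hq1 : (e₁ + r) / b ^ (m+1) = 2 :=
          Nat.div_eq_of_lt_le (by omega) (by omega)
        have hdiv' : (e₁ + e₀) / b ^ (m+1) = q + 2 := by omega
        simp only [hF, hlog, Fin.val_mk]
        rw [if_neg hcase, hmod, hdiv']
    calc Set.ncard {B : {M // M ∈ Km b m} → Λ |
          ∃ N : ℕ, 1 ≤ N ∧ ∀ M : {M // M ∈ Km b m}, B M = x (M.1 * N)}
        ≤ (Set.range F).ncard := Set.ncard_le_ncard hsub (Set.toFinite _)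
      _ ≤ Fintype.card (S × S × Fin (b ^ (m+1))) := by
          rw [← Set.image_univ]
          calc (F '' Set.univ).ncard ≤ (Set.univ : Set (S × S × Fin (b ^ (m+1)))).ncard :=
              Set.ncard_image_le (Set.toFinite _)
          _ = _ := by rw [Set.ncard_univ, Nat.card_eq_fintype_card]
      _ = Fintype.card S ^ 2 * b ^ (m + 1) := by
          simp [Fintype.card_prod, Fintype.card_fin]; ring
  refine ⟨key, ?_⟩
  -- the limit
  have hSpos : 1 ≤ Fintype.card S := Fintype.card_pos_iff.2 ⟨s₀⟩
  have hc1 : ∀ m : ℕ, 1 ≤ Set.ncard {B : {M // M ∈ Km b m} → Λ |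
      ∃ N : ℕ, 1 ≤ N ∧ ∀ M : {M // M ∈ Km b m}, B M = x (M.1 * N)} := by
    intro m
    have hne : {B : {M // M ∈ Km b m} → Λ |
        ∃ N : ℕ, 1 ≤ N ∧ ∀ M : {M // M ∈ Km b m}, B M = x (M.1 * N)}.Nonempty :=
      ⟨fun M => x (M.1 * 1), 1, le_refl 1, fun M => rfl⟩
    exact (Set.ncard_pos (Set.toFinite _)).2 hne
  have hblt : (0:ℝ) < (b:ℝ) := by positivity
  have hbR : (1:ℝ) < (b:ℝ) := by exact_mod_cast hb1
  set A : ℝ := ((Fintype.card S ^ 2 : ℕ) : ℝ) with hA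
  have hA1 : (1:ℝ) ≤ A := by
    rw [hA]; exact_mod_cast Nat.one_le_iff_ne_zero.2 (by positivity)
  have hg : Tendsto (fun m : ℕ =>
      (Real.log A + ((m:ℝ)+1) * Real.log b) / (b:ℝ) ^ (m+1)) atTop (nhds 0) := by
    have hrnn : (0:ℝ) ≤ (b:ℝ)⁻¹ := by positivity
    have hrlt : (b:ℝ)⁻¹ < 1 := by
      rw [inv_lt_one_iff₀]; right; exact hbR
    have h1 : Tendsto (fun m : ℕ => (b:ℝ)⁻¹ ^ (m+1)) atTop (nhds 0) :=
      (tendsto_pow_atTop_nhds_zero_of_lt_one hrnn hrlt).comp (tendsto_add_atTop_nat 1)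
    have h2 : Tendsto (fun m : ℕ => ((m+1 : ℕ) : ℝ) * (b:ℝ)⁻¹ ^ (m+1)) atTop (nhds 0) :=
      (tendsto_self_mul_const_pow_of_lt_one hrnn hrlt).comp (tendsto_add_atTop_nat 1)
    have heq : (fun m : ℕ => (Real.log A + ((m:ℝ)+1) * Real.log b) / (b:ℝ) ^ (m+1)) =
        fun m : ℕ => Real.log A * (b:ℝ)⁻¹ ^ (m+1) +
          Real.log b * (((m+1 : ℕ) : ℝ) * (b:ℝ)⁻¹ ^ (m+1)) := by
      funext m
      have hbne : ((b:ℝ) ^ (m+1)) ≠ 0 := by positivity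
      rw [div_eq_mul_inv, ← inv_pow]
      push_cast
      ring
    rw [heq]
    have := (h1.const_mul (Real.log A)).add (h2.const_mul (Real.log b))
    simpa using this
  apply squeeze_zero (g := fun m : ℕ =>
      (Real.log A + ((m:ℝ)+1) * Real.log b) / (b:ℝ) ^ (m+1)) _ _ hg
  · intro m
    apply div_nonneg
    · apply Real.log_nonneg
      exact_mod_cast hc1 m
    · positivity
  · intro m
    rw [Stmt19Aux.card_Km hb m]
    have hnum : Real.log (Set.ncard {B : {M // M ∈ Km b m} → Λ |
          ∃ N : ℕ, 1 ≤ N ∧ ∀ M : {M // M ∈ Km b m}, B M = x (M.1 * N)} : ℝ) ≤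
        Real.log A + ((m:ℝ)+1) * Real.log b := by
      have hle : ((Set.ncard {B : {M // M ∈ Km b m} → Λ |
          ∃ N : ℕ, 1 ≤ N ∧ ∀ M : {M // M ∈ Km b m}, B M = x (M.1 * N)} : ℕ) : ℝ) ≤
          A * (b:ℝ) ^ (m+1) := by
        have hk := key m
        rw [hA]
        push_cast
        exact_mod_cast hk
      calc Real.log _ ≤ Real.log (A * (b:ℝ) ^ (m+1)) :=
            Real.log_le_log (by exact_mod_cast hc1 m) hle
        _ = Real.log A + Real.log ((b:ℝ) ^ (m+1)) :=
            Real.log_mul (by positivity) (by positivity)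
        _ = Real.log A + ((m:ℝ)+1) * Real.log b := by
            rw [Real.log_pow]; push_cast; ring
      -- done
    have hcast : ((b ^ (m+1) : ℕ) : ℝ) = (b:ℝ) ^ (m+1) := by push_cast; ring
    rw [hcast]
    exact (div_le_div_iff_of_pos_right (by positivity)).2 hnum
end
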